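/- Let α₁, β₁, α₂, β₂ be real numbers with α₁, α₂ positive, irrational and satisfying 1/α₁ + 1/α₂ = 1. Then the family {S(α₁,β₁), S(α₂,β₂)} is an eventual exact 1-cover if and only if β₁/α₁ + β₂/α₂ is an integer. -/

import Mathlib

/-!
Write `u_i(N) = (β_i - N) / α_i` and `s = β₁ / α₁ + β₂ / α₂`, so that `u₁(N) + u₂(N) = s - N`.
For `N > β_i` the multiplicity of `N` in `S(α_i, β_i)` is `⌊u_i(N)⌋ - ⌊u_i(N + 1)⌋`, hence the
total multiplicity of `N` is `1 + c(N + 1) - c(N)`, where `c(N) = ⌊u₁ + u₂⌋ - ⌊u₁⌋ - ⌊u₂⌋` is the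
carry of the floors; it is `1` if `{u₁(N)} > {s}` and `0` otherwise. So the pair is an eventual
exact cover iff the carry is eventually constant. As `1 / α₁` is irrational, the fractional parts
`{u₁(N)}` are dense in `[0, 1]` along every tail: if `{s} > 0` the carry takes both values
infinitely often, while if `s ∈ ℤ` it vanishes only when `u₁(N) ∈ ℤ`, i.e. for at most one `N`.
-/

/-- The number of positive integers `n` with `⌊n·α + β⌋ = N`, i.e. the multiplicity
of `N` in the Beatty sequence `S(α,β)`. -/
noncomputable def beattyCount (α β : ℝ) (N : ℤ) : ℕ :=
  Nat.card {n : ℕ // 0 < n ∧ ⌊(n : ℝ) * α + β⌋ = N}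

open Filter Set Int

theorem Irrational.eventually_fract_add_mul_ne_zero {γ : ℝ} (hγ : Irrational γ) (u : ℝ) :
    ∀ᶠ N : ℤ in atTop, fract (u + N * γ) ≠ 0 := by
  have hsub : {N : ℤ | fract (u + N * γ) = 0}.Subsingleton := by
    intro N hN N' hN'
    obtain ⟨k, hk⟩ := fract_eq_zero_iff.1 hN
    obtain ⟨k', hk'⟩ := fract_eq_zero_iff.1 hN'
    by_contra hne
    refine (hγ.intCast_mul (sub_ne_zero.2 (Ne.symm hne))).ne_int (k' - k) ?_
    push_cast
    linarith
  exact atTop_le_cofinite hsub.finite.eventually_cofinite_notMem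

theorem Irrational.frequently_fract_add_mul_mem_Ioo {γ : ℝ} (hγ : Irrational γ) (u : ℝ)
    {a b : ℝ} (ha : 0 ≤ a) (hab : a < b) (hb : b ≤ 1) :
    ∃ᶠ N : ℤ in atTop, fract (u + N * γ) ∈ Ioo a b := by
  let π : ℝ → AddCircle (1 : ℝ) := (↑)
  have hdense : DenseRange (fun N : ℤ => N • π γ) :=
    AddCircle.denseRange_zsmul_coe_iff.2 (by simpa using hγ)
  have hcluster : MapClusterPt (π ((a + b) / 2 - u)) atTop (fun N : ℤ => N • π γ) := by
    rw [mapClusterPt_atTop_zsmul_iff_nsmul,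
      mapClusterPt_atTop_nsmul_iff_mem_topologicalClosure_zmultiples,
      ← SetLike.mem_coe, AddSubgroup.topologicalClosure_coe, AddSubgroup.coe_zmultiples]
    exact hdense _
  have hshift := hcluster.continuousAt_comp (continuous_const_add (π u)).continuousAt
  have hopen : π '' Ioo a b ∈ nhds (π u + π ((a + b) / 2 - u)) := by
    refine (QuotientAddGroup.isOpenMap_coe _ isOpen_Ioo).mem_nhds ⟨(a + b) / 2, ?_, ?_⟩
    · constructor <;> linarith
    · simp [π]
  refine (hshift.frequently hopen).mono ?_
  rintro N ⟨w, hw, hwN⟩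
  have hN : π (u + N * γ) = π w := by simpa [π, ← zsmul_eq_mul] using hwN.symm
  have hfract : fract (u + N * γ) = w := by
    refine (AddCircle.coe_eq_coe_iff_of_mem_Ico (p := 1) (a := 0) ?_ ?_).1 ?_
    · simpa using fract_lt_one _
    · simpa using ⟨ha.trans hw.1.le, hw.2.trans_le hb⟩
    · rw [AddCircle.coe_fract]; exact hN
  rwa [hfract]

theorem beattyCount_eq_ceil_sub_ceil {α β : ℝ} (hα : 0 < α) {N : ℤ} (hN : β < N) :
    beattyCount α β N = ⌈(N + 1 - β) / α⌉₊ - ⌈(N - β) / α⌉₊ := by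
  have hmem : ∀ n : ℕ, (0 < n ∧ ⌊(n : ℝ) * α + β⌋ = N) ↔
      n ∈ Finset.Ico ⌈(N - β) / α⌉₊ ⌈(N + 1 - β) / α⌉₊ := by
    intro n
    have hpos : 0 < (N - β) / α := div_pos (by linarith) hα
    rw [Finset.mem_Ico, Nat.ceil_le, Nat.lt_ceil, div_le_iff₀ hα, lt_div_iff₀ hα, floor_eq_iff]
    constructor
    · rintro ⟨-, hlo, hhi⟩
      constructor <;> linarith
    · rintro ⟨hlo, hhi⟩
      refine ⟨Nat.cast_pos.1 (hpos.trans_le ((div_le_iff₀ hα).2 hlo)), ?_, ?_⟩ <;> linarith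
  rw [beattyCount, Nat.card_congr (Equiv.subtypeEquivRight hmem), Nat.card_eq_fintype_card,
    Fintype.card_coe, Nat.card_Ico]

theorem beattyCount_eq_floor_sub_floor {α β : ℝ} (hα : 0 < α) {N : ℤ} (hN : β < N) :
    (beattyCount α β N : ℤ) = ⌊(β - N) / α⌋ - ⌊(β - (N + 1)) / α⌋ := by
  have hle : (N - β) / α ≤ (N + 1 - β) / α := by gcongr; linarith
  have hpos : 0 ≤ (N - β) / α := div_nonneg (by linarith) hα.le
  have hfloor : ∀ x : ℝ, ⌊(β - x) / α⌋ = -⌈(x - β) / α⌉ := fun x => by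
    rw [← floor_neg, ← neg_div, neg_sub]
  rw [beattyCount_eq_ceil_sub_ceil hα hN, Nat.cast_sub (Nat.ceil_mono hle),
    natCast_ceil_eq_ceil hpos, natCast_ceil_eq_ceil (hpos.trans hle), hfloor, hfloor]
  ring

theorem Int.exists_eventually_eq_of_eventually_add_one_eq {α : Type*} {f : ℤ → α}
    (h : ∀ᶠ N in atTop, f (N + 1) = f N) : ∃ a, ∀ᶠ N in atTop, f N = a := by
  obtain ⟨M, hM⟩ := eventually_atTop.1 h
  refine ⟨f M, eventually_atTop.2 ⟨M, fun N hN => ?_⟩⟩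
  induction N, hN using Int.leInduction with
  | base => rfl
  | succ n hn ih => rw [hM n hn, ih]

section FloorCarry

variable {R : Type*} [CommRing R] [LinearOrder R] [IsStrictOrderedRing R] [FloorRing R]

def floorCarry (u v : R) : ℤ := ⌊u + v⌋ - ⌊u⌋ - ⌊v⌋

theorem floorCarry_eq_ite (u v : R) :
    floorCarry u v = if fract (u + v) < fract u then 1 else 0 := by
  have hcast : (floorCarry u v : R) = fract u + fract v - fract (u + v) := by
    simp only [floorCarry, fract]
    push_cast
    ring
  have hlo : (-1 : R) < floorCarry u v := by
    linarith [fract_nonneg u, fract_nonneg v, fract_lt_one (u + v)]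
  have hhi : (floorCarry u v : R) < 2 := by
    linarith [fract_lt_one u, fract_lt_one v, fract_nonneg (u + v)]
  have h01 : floorCarry u v = 0 ∨ floorCarry u v = 1 := by
    have hlo' : -1 < floorCarry u v := by exact_mod_cast hlo
    have hhi' : floorCarry u v < 2 := by exact_mod_cast hhi
    omega
  split_ifs with h <;> rcases h01 with h0 | h1
  · rw [h0, cast_zero] at hcast
    linarith [fract_nonneg v]
  · exact h1
  · exact h0
  · rw [h1, cast_one] at hcast
    linarith [fract_lt_one v]

end FloorCarry

noncomputable def beattyCarry (α₁ β₁ α₂ β₂ : ℝ) (N : ℤ) : ℤ :=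
  floorCarry ((β₁ - N) / α₁) ((β₂ - N) / α₂)

section BeattyPair

variable {α₁ β₁ α₂ β₂ : ℝ}

theorem sub_div_add_sub_div_of_inv_add_inv (hsum : 1 / α₁ + 1 / α₂ = 1) (x : ℝ) :
    (β₁ - x) / α₁ + (β₂ - x) / α₂ = β₁ / α₁ + β₂ / α₂ - x := by
  linear_combination (-x) * hsum

theorem beattyCarry_eq_ite (hsum : 1 / α₁ + 1 / α₂ = 1) (N : ℤ) :
    beattyCarry α₁ β₁ α₂ β₂ N =
      if fract (β₁ / α₁ + β₂ / α₂) < fract ((β₁ - N) / α₁) then 1 else 0 := by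
  rw [beattyCarry, floorCarry_eq_ite, sub_div_add_sub_div_of_inv_add_inv hsum, fract_sub_intCast]

theorem beattyCount_add_beattyCount_eq (h1 : 0 < α₁) (h2 : 0 < α₂)
    (hsum : 1 / α₁ + 1 / α₂ = 1) {N : ℤ} (hN₁ : β₁ < N) (hN₂ : β₂ < N) :
    (beattyCount α₁ β₁ N + beattyCount α₂ β₂ N : ℤ) =
      1 + beattyCarry α₁ β₁ α₂ β₂ (N + 1) - beattyCarry α₁ β₁ α₂ β₂ N := by
  have hfloor : ∀ M : ℤ, ⌊(β₁ - M) / α₁ + (β₂ - M) / α₂⌋ = ⌊β₁ / α₁ + β₂ / α₂⌋ - M := fun M => by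
    rw [sub_div_add_sub_div_of_inv_add_inv hsum, floor_sub_intCast]
  rw [beattyCount_eq_floor_sub_floor h1 hN₁, beattyCount_eq_floor_sub_floor h2 hN₂]
  simp only [beattyCarry, floorCarry, hfloor]
  push_cast
  ring

theorem fract_eq_zero_of_eventually_beattyCarry_add_one_eq (hi1 : Irrational α₁)
    (hsum : 1 / α₁ + 1 / α₂ = 1)
    (h : ∀ᶠ N in atTop, beattyCarry α₁ β₁ α₂ β₂ (N + 1) = beattyCarry α₁ β₁ α₂ β₂ N) :
    fract (β₁ / α₁ + β₂ / α₂) = 0 := by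
  set s := β₁ / α₁ + β₂ / α₂
  obtain ⟨k, hk⟩ := Int.exists_eventually_eq_of_eventually_add_one_eq h
  by_contra hs
  have hs0 : 0 < fract s := (fract_nonneg s).lt_of_ne' hs
  have hu : ∀ N : ℤ, (β₁ - N) / α₁ = β₁ / α₁ + N * (-α₁⁻¹) := fun N => by ring
  have hzero : ∃ᶠ N in atTop, beattyCarry α₁ β₁ α₂ β₂ N = 0 :=
    (hi1.inv.neg.frequently_fract_add_mul_mem_Ioo _ le_rfl hs0 (fract_lt_one s).le).mono
      fun N hN => by rw [beattyCarry_eq_ite hsum, hu, if_neg hN.2.le.not_gt]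
  have hone : ∃ᶠ N in atTop, beattyCarry α₁ β₁ α₂ β₂ N = 1 :=
    (hi1.inv.neg.frequently_fract_add_mul_mem_Ioo _ (fract_nonneg s) (fract_lt_one s) le_rfl).mono
      fun N hN => by rw [beattyCarry_eq_ite hsum, hu, if_pos hN.1]
  obtain ⟨N, hN, hN0⟩ := (hk.and_frequently hzero).exists
  obtain ⟨N', hN', hN1⟩ := (hk.and_frequently hone).exists
  omega

theorem eventually_beattyCarry_eq_one (hi1 : Irrational α₁) (hsum : 1 / α₁ + 1 / α₂ = 1)
    (hs : fract (β₁ / α₁ + β₂ / α₂) = 0) :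
    ∀ᶠ N in atTop, beattyCarry α₁ β₁ α₂ β₂ N = 1 := by
  have hu : ∀ N : ℤ, (β₁ - N) / α₁ = β₁ / α₁ + N * (-α₁⁻¹) := fun N => by ring
  filter_upwards [hi1.inv.neg.eventually_fract_add_mul_ne_zero (β₁ / α₁)] with N hN
  rw [beattyCarry_eq_ite hsum, hs, if_pos ((fract_nonneg _).lt_of_ne' (hu N ▸ hN))]

end BeattyPair

theorem inhomogeneous_pair_EEC_iff_general (α₁ β₁ α₂ β₂ : ℝ)
    (h1 : 0 < α₁) (h2 : 0 < α₂) (hi1 : Irrational α₁)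
    (hsum : 1 / α₁ + 1 / α₂ = 1) :
    (∃ N₀ : ℤ, ∀ N : ℤ, N ≥ N₀ → beattyCount α₁ β₁ N + beattyCount α₂ β₂ N = 1) ↔
      ∃ z : ℤ, β₁ / α₁ + β₂ / α₂ = (z : ℝ) := by
  have hcount : ∀ᶠ N : ℤ in atTop, (beattyCount α₁ β₁ N + beattyCount α₂ β₂ N : ℤ) =
      1 + beattyCarry α₁ β₁ α₂ β₂ (N + 1) - beattyCarry α₁ β₁ α₂ β₂ N := by
    filter_upwards [tendsto_intCast_atTop_atTop.eventually_gt_atTop β₁,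
      tendsto_intCast_atTop_atTop.eventually_gt_atTop β₂] with N hN₁ hN₂
    exact beattyCount_add_beattyCount_eq h1 h2 hsum hN₁ hN₂
  rw [← eventually_atTop, exists_congr fun z => eq_comm, ← mem_range, ← fract_eq_zero_iff]
  constructor
  · intro hcover
    refine fract_eq_zero_of_eventually_beattyCarry_add_one_eq hi1 hsum ?_
    filter_upwards [hcover, hcount] with N hN hc
    omega
  · intro hs
    have hone := eventually_beattyCarry_eq_one hi1 hsum hs
    have hone' := (tendsto_atTop_add_const_right atTop 1 tendsto_id).eventually hone
    filter_upwards [hcount, hone, hone'] with N hc hN hN'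
    rw [id] at hN'
    omega

theorem inhomogeneous_pair_EEC_iff (α₁ β₁ α₂ β₂ : ℝ)
    (h1 : 0 < α₁) (h2 : 0 < α₂) (hi1 : Irrational α₁) (hi2 : Irrational α₂)
    (hsum : 1 / α₁ + 1 / α₂ = 1) :
    (∃ N₀ : ℤ, ∀ N : ℤ, N ≥ N₀ → beattyCount α₁ β₁ N + beattyCount α₂ β₂ N = 1) ↔
      ∃ z : ℤ, β₁ / α₁ + β₂ / α₂ = (z : ℝ) :=
  inhomogeneous_pair_EEC_iff_general α₁ β₁ α₂ β₂ h1 h2 hi1 hsum
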